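/- Let H=(V,F) be a connected finite loopless multigraph, let q∈ℤ_{>0}, and let T be a set of edges on V, disjoint from F, forming a spanning tree of V. Form the multigraph G=(V,F∪T) with weights w(e)=0 and costs c(e)=1 for e∈F, and weights w(e)=1 and costs c(e)=q+1 for e∈T, and budget B=q. Then: (a) for every R⊆F, val(R) = σ(F∖R) − 1, where σ(F∖R) is the number of connected components of (V,F∖R); and (b) max{ val(R) : R⊆F∪T, c(R)≤q } = max{ σ(F∖R) − 1 : R⊆F, |R|≤q }. Hence the maximum components problem on H (remove at most q edges to maximize the number of connected components) reduces to MST interdiction on G with preserved objective values. -/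

import Mathlib

namespace MSTInterdiction

/-- A finite undirected loopless multigraph on vertex type `V` with edge type `E`:
each edge has two distinct endpoints (parallel edges allowed). -/
structure Multigraph (V : Type*) (E : Type*) where
  fst : E → V
  snd : E → V
  loopless : ∀ e, fst e ≠ snd e

variable {V E : Type*}

/-- Adjacency relation using only the edges in `U`. -/
def Multigraph.rel (G : Multigraph V E) (U : Set E) (x y : V) : Prop :=
  ∃ e ∈ U, (G.fst e = x ∧ G.snd e = y) ∨ (G.fst e = y ∧ G.snd e = x)

/-- The graph `(V, U)` is connected. -/
def Multigraph.Connects (G : Multigraph V E) (U : Set E) : Prop :=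
  ∀ x y : V, Relation.EqvGen (G.rel U) x y

/-- `σ(U)`: the number of connected components of `(V, U)`. -/
noncomputable def Multigraph.sigma (G : Multigraph V E) (U : Set E) : ℕ :=
  Nat.card (Quotient (Relation.EqvGen.setoid (G.rel U)))

/-- Total cost (or weight) of a set of edges. -/
noncomputable def setSum (c : E → ℕ) (U : Set E) : ℕ := ∑ᶠ e ∈ U, c e

/-- `val(U)`: the weight of a minimum spanning tree of `(V, E ∖ U)`, i.e. the minimum
of `∑_{e ∈ T} w e` over `T ⊆ E ∖ U` with `(V, T)` connected. -/
noncomputable def Multigraph.val (G : Multigraph V E) (w : E → ℕ) (U : Set E) : ℕ :=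
  sInf {n | ∃ T : Set E, T ⊆ Uᶜ ∧ G.Connects T ∧ setSum w T = n}

/-- `E_{≤ i}`: edges of weight `0` or of weight `2^ℓ` for some natural `ℓ ≤ i`.
In particular `Ele w (-1) = E_{-1}` is the set of edges of weight `0`. -/
def Ele (w : E → ℕ) (i : ℤ) : Set E :=
  {e | w e = 0 ∨ ∃ ℓ : ℕ, (ℓ : ℤ) ≤ i ∧ w e = 2 ^ ℓ}

/-- The connected component of vertex `v` in the graph `(V, S)`. -/
def Multigraph.component (G : Multigraph V E) (S : Set E) (v : V) : Set V :=
  {u | Relation.EqvGen (G.rel S) v u}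

/-- The partition of `V` into the connected components of `(V, S)`. -/
def Multigraph.parts (G : Multigraph V E) (S : Set E) : Set (Set V) :=
  {A | ∃ v : V, A = G.component S v}

/-- Edge `e` has exactly one endpoint in `A`. -/
def Multigraph.oneEnd (G : Multigraph V E) (A : Set V) (e : E) : Prop :=
  (G.fst e ∈ A ∧ G.snd e ∉ A) ∨ (G.fst e ∉ A ∧ G.snd e ∈ A)

/-- Edge `e` has both endpoints in `A`. -/
def Multigraph.twoEnds (G : Multigraph V E) (A : Set V) (e : E) : Prop :=
  G.fst e ∈ A ∧ G.snd e ∈ A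

/-! Removing `R ⊆ F` costs `|R| ≤ q`, while a single tree edge already exceeds the budget, so
feasible interdiction sets are exactly the sets of at most `q` edges of `F`. For such `R`, a
spanning subgraph of `G - R` of least weight keeps all of `F ∖ R` for free and must add at least
`σ(F ∖ R) - 1` tree edges, since each edge lowers the number of components by at most one;
conversely, as the tree edges connect `V`, greedily adding tree edges joining distinct components
reaches a connected graph after exactly `σ(F ∖ R) - 1` of them. -/

namespace Multigraph

variable {G : Multigraph V E} {S S' : Set E}

abbrev Components (G : Multigraph V E) (S : Set E) : Type _ :=
  Quotient (Relation.EqvGen.setoid (G.rel S))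

theorem eqvGen_rel_mono (h : S ⊆ S') {x y : V} (hxy : Relation.EqvGen (G.rel S) x y) :
    Relation.EqvGen (G.rel S') x y :=
  Relation.EqvGen.mono (fun _ _ ⟨e, he, hends⟩ => ⟨e, h he, hends⟩) _ _ hxy

def componentsMap (G : Multigraph V E) (h : S ⊆ S') : G.Components S → G.Components S' :=
  Quotient.map' id fun _ _ => eqvGen_rel_mono h

theorem componentsMap_surjective (h : S ⊆ S') : Function.Surjective (G.componentsMap h) := by
  rintro ⟨x⟩
  exact ⟨Quotient.mk'' x, rfl⟩

theorem sigma_anti [Finite V] (h : S ⊆ S') : G.sigma S' ≤ G.sigma S :=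
  Nat.card_le_card_of_surjective _ (componentsMap_surjective h)

theorem sigma_pos [Finite V] [Nonempty V] (S : Set E) : 0 < G.sigma S :=
  have : Nonempty (G.Components S) := .map (Quotient.mk _) ‹_›
  Nat.card_pos

theorem sigma_le_one_of_connects [Finite V] (h : G.Connects S) : G.sigma S ≤ 1 :=
  Finite.card_le_one_iff_subsingleton.mpr ⟨by rintro ⟨x⟩ ⟨y⟩; exact Quotient.sound (h x y)⟩

theorem eqvGen_rel_insert {e : E} {a b : V} (h : Relation.EqvGen (G.rel (insert e S)) a b) :
    Relation.EqvGen (G.rel S) a b ∨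
      (Relation.EqvGen (G.rel S) a (G.fst e) ∧ Relation.EqvGen (G.rel S) (G.snd e) b) ∨
      (Relation.EqvGen (G.rel S) a (G.snd e) ∧ Relation.EqvGen (G.rel S) (G.fst e) b) := by
  have hrefl := Relation.EqvGen.refl (r := G.rel S)
  have htrans := Relation.EqvGen.trans (r := G.rel S)
  induction h with
  | rel x y hxy =>
    obtain ⟨e', rfl | he', hends⟩ := hxy
    · rcases hends with ⟨rfl, rfl⟩ | ⟨rfl, rfl⟩
      exacts [Or.inr (Or.inl ⟨hrefl _, hrefl _⟩), Or.inr (Or.inr ⟨hrefl _, hrefl _⟩)]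
    · exact Or.inl (Relation.EqvGen.rel _ _ ⟨e', he', hends⟩)
  | refl x => exact Or.inl (hrefl x)
  | symm x y _ ih => rcases ih with h | ⟨h₁, h₂⟩ | ⟨h₁, h₂⟩ <;> grind [Relation.EqvGen.symm]
  | trans x y z _ _ ih₁ ih₂ => rcases ih₁ with h | ⟨h₁, h₂⟩ | ⟨h₁, h₂⟩ <;> grind

theorem sigma_le_sigma_insert_add_one [Finite V] (S : Set E) (e : E) :
    G.sigma S ≤ G.sigma (insert e S) + 1 := by
  classical
  let merge := G.componentsMap (Set.subset_insert e S)
  -- By `eqvGen_rel_insert`, `merge` is injective away from the component of `snd e`.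
  let f : G.Components S → Option (G.Components (insert e S)) := fun x =>
    if x = Quotient.mk'' (G.snd e) then none else some (merge x)
  have hf : Function.Injective f := by
    intro x y hxy
    by_cases hx : x = Quotient.mk'' (G.snd e) <;> by_cases hy : y = Quotient.mk'' (G.snd e)
    · exact hx.trans hy.symm
    · simp [f, hx, hy] at hxy
    · simp [f, hx, hy] at hxy
    · simp only [f, hx, hy, if_false, Option.some_inj] at hxy
      induction x using Quotient.inductionOn'
      induction y using Quotient.inductionOn'
      rcases eqvGen_rel_insert (Quotient.exact hxy) with h | ⟨-, h⟩ | ⟨h, -⟩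
      · exact Quotient.sound h
      · exact absurd (Quotient.sound h.symm) hy
      · exact absurd (Quotient.sound h) hx
  calc G.sigma S ≤ Nat.card (Option (G.Components (insert e S))) :=
        Nat.card_le_card_of_injective f hf
    _ = G.sigma (insert e S) + 1 := Finite.card_option

theorem sigma_insert_lt [Finite V] {e : E}
    (he : ¬ Relation.EqvGen (G.rel S) (G.fst e) (G.snd e)) :
    G.sigma (insert e S) < G.sigma S := by
  refine (sigma_anti (Set.subset_insert e S)).lt_of_ne fun hcard => he ?_
  have hinj : Function.Injective (G.componentsMap (Set.subset_insert e S)) :=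
    ((Nat.bijective_iff_surjective_and_card _).mpr ⟨componentsMap_surjective _, hcard.symm⟩).1
  exact Quotient.exact (hinj (Quotient.sound
    (Relation.EqvGen.rel _ _ ⟨e, Set.mem_insert e S, Or.inl ⟨rfl, rfl⟩⟩)))

theorem exists_mem_not_eqvGen_of_eqvGen {U : Set E} {x y : V}
    (hU : Relation.EqvGen (G.rel U) x y) (hS : ¬ Relation.EqvGen (G.rel S) x y) :
    ∃ e ∈ U, ¬ Relation.EqvGen (G.rel S) (G.fst e) (G.snd e) := by
  by_contra! h
  refine hS ((Relation.EqvGen.is_equivalence _).eqvGen_iff.mp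
    (Relation.EqvGen.mono (fun a b ⟨e, he, hends⟩ => ?_) _ _ hU))
  rcases hends with ⟨rfl, rfl⟩ | ⟨rfl, rfl⟩
  exacts [h e he, (h e he).symm]

theorem sigma_le_sigma_union_add_ncard [Finite V] (S : Set E) {M : Set E} (hM : M.Finite) :
    G.sigma S ≤ G.sigma (S ∪ M) + M.ncard := by
  induction M, hM using Set.Finite.induction_on with
  | empty => simp
  | @insert e M heM hM ih =>
    rw [Set.union_insert, Set.ncard_insert_of_notMem heM hM]
    have := sigma_le_sigma_insert_add_one (G := G) (S ∪ M) e
    omega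

theorem exists_subset_connects_union [Finite V] {C : Set E} (hC : G.Connects C) (S : Set E) :
    ∃ M ⊆ C, M.Finite ∧ M.ncard ≤ G.sigma S - 1 ∧ G.Connects (S ∪ M) := by
  induction hn : G.sigma S using Nat.strong_induction_on generalizing S with
  | _ n ih =>
  by_cases hS : G.Connects S
  · exact ⟨∅, Set.empty_subset C, Set.finite_empty, by simp, by simpa⟩
  obtain ⟨x, y, hxy⟩ : ∃ x y, ¬ Relation.EqvGen (G.rel S) x y := by
    simpa [Multigraph.Connects] using hS
  have : Nonempty V := ⟨x⟩
  obtain ⟨e, heC, he⟩ := exists_mem_not_eqvGen_of_eqvGen (hC x y) hxy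
  have hlt := sigma_insert_lt he
  have hpos := sigma_pos (G := G) (insert e S)
  obtain ⟨M, hMC, hM, hMcard, hMconn⟩ := ih _ (hn ▸ hlt) (insert e S) rfl
  refine ⟨insert e M, Set.insert_subset heC hMC, hM.insert e, ?_, ?_⟩
  · have := Set.ncard_insert_le e M
    omega
  · rwa [Set.union_insert, ← Set.insert_union]

end Multigraph

theorem setSum_eq_ncard {c : E → ℕ} {U : Set E} (h : ∀ e ∈ U, c e = 1) :
    setSum c U = U.ncard :=
  (finsum_mem_congr rfl h).trans finsum_one

theorem le_setSum {c : E → ℕ} {U : Set E} (hU : U.Finite) {e : E} (he : e ∈ U) :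
    c e ≤ setSum c U := by
  rw [setSum, finsum_mem_eq_finite_toFinset_sum _ hU]
  exact Finset.single_le_sum (fun _ _ => Nat.zero_le _) (hU.mem_toFinset.mpr he)

theorem subset_of_setSum_le [Finite E] {c : E → ℕ} {A R : Set E} {q : ℕ}
    (hc : ∀ e ∉ A, q < c e) (hR : setSum c R ≤ q) : R ⊆ A := fun e he => by
  by_contra heA
  exact (hc e heA).not_ge ((le_setSum R.toFinite he).trans hR)

section ZeroOneWeights

variable {G : Multigraph V E} {w : E → ℕ} {A : Set E}

theorem setSum_eq_ncard_diff (hwA : ∀ e ∈ A, w e = 0) (hwAc : ∀ e ∉ A, w e = 1) (U : Set E) :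
    setSum w U = (U \ A).ncard := by
  have hsupp : U ∩ Function.support w = U \ A := by
    ext e
    by_cases he : e ∈ A <;> simp [he, hwA, hwAc]
  rw [setSum, ← finsum_mem_inter_support, hsupp]
  exact setSum_eq_ncard fun e he => hwAc e he.2

theorem sigma_sub_one_le_setSum [Finite V] [Finite E] (hwA : ∀ e ∈ A, w e = 0)
    (hwAc : ∀ e ∉ A, w e = 1) {R U : Set E} (hU : U ⊆ Rᶜ) (hUconn : G.Connects U) :
    G.sigma (A \ R) - 1 ≤ setSum w U := by
  have hcover : U ⊆ (A \ R) ∪ (U \ A) := fun e he => by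
    by_cases heA : e ∈ A
    exacts [Or.inl ⟨heA, hU he⟩, Or.inr ⟨he, heA⟩]
  have := G.sigma_le_sigma_union_add_ncard (A \ R) (U \ A).toFinite
  have := (G.sigma_anti hcover).trans (G.sigma_le_one_of_connects hUconn)
  rw [setSum_eq_ncard_diff hwA hwAc]
  omega

theorem exists_connects_setSum_le [Finite V] (hwA : ∀ e ∈ A, w e = 0)
    (hwAc : ∀ e ∉ A, w e = 1) (hconn : G.Connects Aᶜ) {R : Set E} (hR : R ⊆ A) :
    ∃ U ⊆ Rᶜ, G.Connects U ∧ setSum w U ≤ G.sigma (A \ R) - 1 := by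
  obtain ⟨M, hMA, -, hMcard, hMconn⟩ := G.exists_subset_connects_union hconn (A \ R)
  refine ⟨(A \ R) ∪ M, Set.union_subset (fun e he => he.2) fun e he heR => hMA he (hR heR),
    hMconn, ?_⟩
  have hdiff : (A \ R ∪ M) \ A = M :=
    Set.ext fun e => ⟨fun he => he.1.resolve_left fun h => he.2 h.1, fun he => ⟨Or.inr he, hMA he⟩⟩
  rwa [setSum_eq_ncard_diff hwA hwAc, hdiff]

theorem val_eq_sigma_sub_one [Finite V] [Finite E] (hwA : ∀ e ∈ A, w e = 0)
    (hwAc : ∀ e ∉ A, w e = 1) (hconn : G.Connects Aᶜ) {R : Set E} (hR : R ⊆ A) :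
    G.val w R = G.sigma (A \ R) - 1 := by
  obtain ⟨U, hUR, hUconn, hU⟩ := exists_connects_setSum_le hwA hwAc hconn hR
  unfold Multigraph.val
  refine le_antisymm (le_trans (Nat.sInf_le ⟨U, hUR, hUconn, rfl⟩) hU) ?_
  refine le_csInf ⟨_, U, hUR, hUconn, rfl⟩ ?_
  rintro _ ⟨U', hU'R, hU'conn, rfl⟩
  exact sigma_sub_one_le_setSum hwA hwAc hU'R hU'conn

end ZeroOneWeights

theorem mcp_reduction_general
    {V F T : Type*} [Fintype V] [Fintype F] [Fintype T]
    (G : Multigraph V (F ⊕ T)) (q : ℕ)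
    (hTconn : G.Connects (Set.range Sum.inr))
    (w : F ⊕ T → ℕ) (hwF : ∀ f : F, w (Sum.inl f) = 0) (hwT : ∀ t : T, w (Sum.inr t) = 1)
    (c : F ⊕ T → ℕ) (hcF : ∀ f : F, c (Sum.inl f) = 1) (hcT : ∀ t : T, c (Sum.inr t) = q + 1) :
    (∀ R : Set (F ⊕ T), R ⊆ Set.range Sum.inl →
      G.val w R = G.sigma (Set.range Sum.inl \ R) - 1) ∧
    sSup {n : ℕ | ∃ R : Set (F ⊕ T), setSum c R ≤ q ∧ G.val w R = n}
      = sSup {n : ℕ | ∃ R : Set (F ⊕ T), R ⊆ Set.range Sum.inl ∧ Nat.card R ≤ q ∧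
          G.sigma (Set.range Sum.inl \ R) - 1 = n} := by
  have hval (R : Set (F ⊕ T)) (hR : R ⊆ Set.range Sum.inl) :
      G.val w R = G.sigma (Set.range Sum.inl \ R) - 1 := by
    refine val_eq_sigma_sub_one ?_ ?_ (Set.compl_range_inl ▸ hTconn) hR
    · rintro _ ⟨f, rfl⟩
      exact hwF f
    · rintro (f | t) h
      exacts [absurd ⟨f, rfl⟩ h, hwT t]
  have hcost (R : Set (F ⊕ T)) (hR : R ⊆ Set.range Sum.inl) : setSum c R = Nat.card R := by
    rw [Nat.card_coe_set_eq]
    refine setSum_eq_ncard fun e he => ?_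
    obtain ⟨f, rfl⟩ := hR he
    exact hcF f
  have hfeasible (R : Set (F ⊕ T)) (hR : setSum c R ≤ q) : R ⊆ Set.range Sum.inl := by
    refine subset_of_setSum_le (fun e he => ?_) hR
    rcases e with f | t
    exacts [absurd ⟨f, rfl⟩ he, hcT t ▸ q.lt_succ_self]
  refine ⟨hval, congrArg sSup (Set.ext fun n => ⟨?_, ?_⟩)⟩
  · rintro ⟨R, hRc, rfl⟩
    have hRF := hfeasible R hRc
    exact ⟨R, hRF, hcost R hRF ▸ hRc, (hval R hRF).symm⟩
  · rintro ⟨R, hRF, hcard, rfl⟩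
    exact ⟨R, (hcost R hRF).trans_le hcard, hval R hRF⟩

/-- Reduction of the maximum components problem to MST interdiction.
`H = (V, F)` is a connected loopless multigraph and `T` a spanning tree on `V` disjoint
from `F` (the combined edge set is modeled as the sum type `F ⊕ T`). In the multigraph
`G = (V, F ∪ T)` with weights `0`/costs `1` on `F` and weights `1`/costs `q+1` on `T`,
and budget `B = q`: (a) `val(R) = σ(F∖R) − 1` for every `R ⊆ F`; and (b) the optimal
MST interdiction value equals the optimal value of the maximum components problem on
`H` with at most `q` removals. -/
theorem mcp_reduction
    {V F T : Type*} [Fintype V] [Nonempty V] [Fintype F] [Fintype T]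
    (G : Multigraph V (F ⊕ T)) (q : ℕ) (hq : 0 < q)
    (hHconn : G.Connects (Set.range Sum.inl))
    (hTconn : G.Connects (Set.range Sum.inr))
    (hTcard : Fintype.card T = Fintype.card V - 1)
    (w : F ⊕ T → ℕ) (hwF : ∀ f : F, w (Sum.inl f) = 0) (hwT : ∀ t : T, w (Sum.inr t) = 1)
    (c : F ⊕ T → ℕ) (hcF : ∀ f : F, c (Sum.inl f) = 1) (hcT : ∀ t : T, c (Sum.inr t) = q + 1) :
    (∀ R : Set (F ⊕ T), R ⊆ Set.range Sum.inl →
      G.val w R = G.sigma (Set.range Sum.inl \ R) - 1) ∧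
    sSup {n : ℕ | ∃ R : Set (F ⊕ T), setSum c R ≤ q ∧ G.val w R = n}
      = sSup {n : ℕ | ∃ R : Set (F ⊕ T), R ⊆ Set.range Sum.inl ∧ Nat.card R ≤ q ∧
          G.sigma (Set.range Sum.inl \ R) - 1 = n} :=
  mcp_reduction_general G q hTconn w hwF hwT c hcF hcT

end MSTInterdiction
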